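/- Let r be a W-valued 1-form on ℝ^{2n}, D = −δ + d + (i/ℏ)[r,·], and suppose the curvature Ω := ω + δr − dr − (i/ℏ) r⋆r has all coefficients independent of the y-variables, i.e. D is an Abelian connection with Weyl curvature Ω ∈ Ω^2(ℝ^{2n},ℂ)[[ℏ]]. With K_0 = −( Er − iℏ·∂r/∂ℏ + i r + (i/2) Σ_{i,j} ω_{ij} y^i dx^j ), one has D K_0 = i( Ω − ℏ·∂Ω/∂ℏ ) = −iℏ^2·∂(ℏ^{−1}Ω)/∂ℏ. -/

import Mathlib

/-!  Common definitions: formal Weyl algebras, Moyal products, Weyl-bundle valued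
differential forms on ℝ^{2n}, Fedosov connections, star-products on smooth functions,
multidifferential operators and Hochschild coboundaries.  -/

noncomputable section
namespace StarPaper

open scoped BigOperators

/-! ### Formal power series in y -/

/-- The fiber coefficient ring `ℂ[[y^1, …, y^N]]`. -/
abbrev Wc (N : ℕ) := MvPowerSeries (Fin N) ℂ

/-- Build a formal power series from its coefficient function. -/
def Wc.mk {N : ℕ} (f : (Fin N →₀ ℕ) → ℂ) : Wc N := f

/-- Formal partial derivative `∂/∂y^i` on `ℂ[[y]]`. -/
def yD {N : ℕ} (i : Fin N) (a : Wc N) : Wc N :=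
  Wc.mk fun β => ((β i : ℂ) + 1) * MvPowerSeries.coeff (β + Finsupp.single i 1) a

/-- Formal iterated partial derivative `∂^α` on `ℂ[[y]]`. -/
def yDM {N : ℕ} (α : Fin N →₀ ℕ) (a : Wc N) : Wc N :=
  Wc.mk fun β =>
    (∏ i : Fin N, (((β i + α i).factorial : ℂ) / ((β i).factorial : ℂ))) *
      MvPowerSeries.coeff (β + α) a

/-- Iterated derivatives along a tuple of directions. -/
def iterD {R : Type*} {N : ℕ} (D : Fin N → R → R) : {k : ℕ} → (Fin k → Fin N) → R → R
  | 0, _, a => a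
  | _ + 1, v, a => D (v 0) (iterD D (fun t => v t.succ) a)

/-- The `k`-th term of the Moyal–Weyl product for a constant matrix `π`:
`((-iℏ/2)^k/k!) Σ π^{i₁j₁}⋯π^{i_kj_k} (∂^k a/∂y^{i₁}⋯) (∂^k b/∂y^{j₁}⋯)`. -/
def moyalTerm {R : Type*} [CommRing R] [Module ℂ R] {N : ℕ}
    (D : Fin N → R → R) (π : Matrix (Fin N) (Fin N) ℂ) (k : ℕ) (a b : R) : R :=
  ((-Complex.I / 2) ^ k / (Nat.factorial k : ℂ)) •
    ∑ i : Fin k → Fin N, ∑ j : Fin k → Fin N,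
      (∏ t, π (i t) (j t)) • (iterD D i a * iterD D j b)

/-- Moyal product on formal power series `Σ_m ℏ^m F_m` (coefficients `F : ℕ → R`). -/
def moyalN {R : Type*} [CommRing R] [Module ℂ R] {N : ℕ} (D : Fin N → R → R)
    (π : Matrix (Fin N) (Fin N) ℂ) (F G : ℕ → R) : ℕ → R :=
  fun m => ∑ k ∈ Finset.range (m + 1), ∑ l ∈ Finset.range (m - k + 1),
    moyalTerm D π k (F l) (G (m - k - l))

/-- Moyal product on formal Laurent series `Σ_m ℏ^m F_m` (coefficients `F : ℤ → R`);
the sum over contributions is finite for series bounded below in `ℏ`-degree. -/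
def moyalZ {R : Type*} [CommRing R] [Module ℂ R] {N : ℕ} (D : Fin N → R → R)
    (π : Matrix (Fin N) (Fin N) ℂ) (F G : ℤ → R) : ℤ → R :=
  fun m => ∑ᶠ p : ℕ × ℤ, moyalTerm D π p.1 (F p.2) (G (m - p.1 - p.2))

/-- Moyal term for an `ℏ`-dependent matrix `π(ℏ) = π₀ + ℏπ₁`: the part of the `k`-th
Moyal term in which the product of matrix entries contributes `ℏ^d`. -/
def moyalTermH {R : Type*} [CommRing R] [Module ℂ R] {N : ℕ} (D : Fin N → R → R)
    (π0 π1 : Matrix (Fin N) (Fin N) ℂ) (k d : ℕ) (a b : R) : R :=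
  ((-Complex.I / 2) ^ k / (Nat.factorial k : ℂ)) •
    ∑ i : Fin k → Fin N, ∑ j : Fin k → Fin N,
      (∑ T ∈ Finset.univ.powerset.filter (fun T : Finset (Fin k) => T.card = d),
          (∏ t ∈ T, π1 (i t) (j t)) * ∏ t ∈ Tᶜ, π0 (i t) (j t)) •
        (iterD D i a * iterD D j b)

/-- Moyal product built from the `ℏ`-dependent matrix `π(ℏ) = π₀ + ℏπ₁`. -/
def moyalNH {R : Type*} [CommRing R] [Module ℂ R] {N : ℕ} (D : Fin N → R → R)
    (π0 π1 : Matrix (Fin N) (Fin N) ℂ) (F G : ℕ → R) : ℕ → R :=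
  fun m => ∑ k ∈ Finset.range (m + 1), ∑ d ∈ Finset.range (m - k + 1),
    ∑ l ∈ Finset.range (m - k - d + 1),
      moyalTermH D π0 π1 k d (F l) (G (m - k - d - l))

/-- The standard Poisson matrix `π` on `ℝ^{2n}` (inverse of the standard symplectic
matrix `ω`, normalized by `Σ_m ω_{jm} π^{mn} = δ_j^n`). -/
def stdPi (n : ℕ) : Matrix (Fin (2 * n)) (Fin (2 * n)) ℂ :=
  Matrix.of fun i j =>
    if (i : ℕ) + n = (j : ℕ) then 1 else if (j : ℕ) + n = (i : ℕ) then -1 else 0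

/-- The standard symplectic matrix `ω_{ij}`. -/
def stdOmega (n : ℕ) : Matrix (Fin (2 * n)) (Fin (2 * n)) ℂ := -stdPi n

/-! ### The formal Weyl algebra `W = ℂ[[y,ℏ]]` -/

/-- The formal Weyl algebra as `ℏ`-coefficient sequences. -/
abbrev Wa (N : ℕ) := ℕ → Wc N

/-- Moyal–Weyl product on `W` for a constant matrix `π`. -/
def wmulPi {N : ℕ} (π : Matrix (Fin N) (Fin N) ℂ) (a b : Wa N) : Wa N := moyalN yD π a b

/-- Moyal–Weyl product on `W` for the standard symplectic Poisson matrix. -/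
def wmul {n : ℕ} (a b : Wa (2 * n)) : Wa (2 * n) := wmulPi (stdPi n) a b

/-- The unit `1 ∈ W`. -/
def oneW (N : ℕ) : Wa N := fun m => if m = 0 then 1 else 0

/-- Scalar multiplication by a formal power series `s ∈ ℂ[[ℏ]]` (given by its
coefficients `s : ℕ → ℂ`). -/
def hsmul {N : ℕ} (s : ℕ → ℂ) (a : Wa N) : Wa N :=
  fun m => ∑ l ∈ Finset.range (m + 1), s l • a (m - l)

/-- The operator `E = -(i/2) Σ_j y^j ∂/∂y^j` on `ℂ[[y]]`. -/
def EulW {N : ℕ} (a : Wc N) : Wc N :=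
  Wc.mk fun β => -Complex.I / 2 * (∑ i : Fin N, (β i : ℂ)) * MvPowerSeries.coeff β a

/-- `E` on the Weyl algebra, acting on each `ℏ`-coefficient. -/
def EulWa {N : ℕ} (a : Wa N) : Wa N := fun m => EulW (a m)

/-- Termwise derivative `∂/∂ℏ`. -/
def hD {N : ℕ} (a : Wa N) : Wa N := fun m => (((m + 1 : ℕ) : ℂ)) • a (m + 1)

/-- Multiplication by `ℏ`. -/
def hM {N : ℕ} (a : Wa N) : Wa N := fun m => match m with
  | 0 => 0
  | Nat.succ m' => a m'

/-- Division by `ℏ` (exact on elements divisible by `ℏ`; discards the constant term). -/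
def hInv {N : ℕ} (a : Wa N) : Wa N := fun m => a (m + 1)

/-- The `ℏ`-derivative of the Moyal–Weyl product structure:
`c₁(a,b) = ∂(a⋆b)/∂ℏ − (∂a/∂ℏ)⋆b − a⋆(∂b/∂ℏ)`. -/
def c1W {n : ℕ} (a b : Wa (2 * n)) : Wa (2 * n) :=
  hD (wmul a b) - wmul (hD a) b - wmul a (hD b)

/-! ### W-valued differential forms on ℝ^{2n} -/

/-- Points of `ℝ^{2n}`. -/
abbrev Pt (n : ℕ) := Fin (2 * n) → ℝ

/-- `W`-valued exterior forms on `ℝ^{2n}`: the component at a finite index set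
`S = {j₁ < ⋯ < j_q}` is the coefficient of `dx^{j₁} ∧ ⋯ ∧ dx^{j_q}`. -/
abbrev WF (n : ℕ) := Finset (Fin (2 * n)) → Pt n → Wa (2 * n)

/-- Sign `(-1)^{#{j ∈ S, j < i}}` for inserting `dx^i` in front of `dx^S`. -/
def insSign {N : ℕ} (S : Finset (Fin N)) (i : Fin N) : ℂ :=
  (-1) ^ (S.filter fun j => j < i).card

/-- Koszul sign for merging `dx^{S₁} ∧ dx^{S₂}` into increasing order. -/
def shuffleSign {N : ℕ} (S1 S2 : Finset (Fin N)) : ℂ :=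
  (-1) ^ ((S1 ×ˢ S2).filter fun p => p.2 < p.1).card

/-- `∂/∂y^i` on the Weyl algebra. -/
def yDa {N : ℕ} (i : Fin N) (w : Wa N) : Wa N := fun m => yD i (w m)

/-- The operator `δ a = Σ_i dx^i ∧ ∂a/∂y^i`. -/
def deltaW {n : ℕ} (a : WF n) : WF n :=
  fun S x => ∑ i ∈ S, insSign S i • yDa i (a (S.erase i) x)

/-- The partial derivative `∂/∂x^i` of a `W`-valued function, taken coefficientwise. -/
def xD {n : ℕ} (i : Fin (2 * n)) (f : Pt n → Wa (2 * n)) (x : Pt n) : Wa (2 * n) :=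
  fun m => Wc.mk fun β =>
    fderiv ℝ (fun x' => MvPowerSeries.coeff β (f x' m)) x (Pi.single i 1)

/-- The exterior derivative `d a = Σ_i dx^i ∧ ∂a/∂x^i` on `W`-valued forms. -/
def extD {n : ℕ} (a : WF n) : WF n :=
  fun S x => ∑ i ∈ S, insSign S i • xD i (a (S.erase i)) x

/-- The product on `W`-valued forms: Moyal–Weyl product combined with wedge product. -/
def wMulF {n : ℕ} (a b : WF n) : WF n :=
  fun S x => ∑ S1 ∈ S.powerset, shuffleSign S1 (S \ S1) • wmul (a S1 x) (b (S \ S1) x)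

/-- Graded commutator `[r, a] = r⋆a − (−1)^{|a|} a⋆r` with a form `r` of degree 1. -/
def comm1 {n : ℕ} (r a : WF n) : WF n :=
  fun S x => wMulF r a S x - (-1 : ℂ) ^ (S.card - 1) • wMulF a r S x

/-- Graded commutator `[u, a] = u⋆a − a⋆u` with a form `u` of even degree. -/
def commE {n : ℕ} (u a : WF n) : WF n := fun S x => wMulF u a S x - wMulF a u S x

/-- The connection `D = −δ + d + (i/ℏ)[r, ·]` determined by a `W`-valued 1-form `r`. -/
def fedD {n : ℕ} (r a : WF n) : WF n :=
  fun S x => -deltaW a S x + extD a S x + Complex.I • hInv (comm1 r a S x)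

/-- A `W`-valued form has smooth coefficients. -/
def WF.Smooth {n : ℕ} (a : WF n) : Prop :=
  ∀ S m β, ContDiff ℝ (⊤ : ℕ∞) fun x => MvPowerSeries.coeff β (a S x m)

/-- A `W`-valued form is homogeneous of form-degree `q`. -/
def isForm {n : ℕ} (q : ℕ) (a : WF n) : Prop := ∀ S, S.card ≠ q → a S = 0

/-- A `W`-valued form is scalar: all coefficients are independent of the `y` variables. -/
def isScalar {n : ℕ} (a : WF n) : Prop :=
  ∀ S x m β, β ≠ 0 → MvPowerSeries.coeff β (a S x m) = 0

/-- The constant standard symplectic 2-form `ω = (1/2) Σ ω_{ij} dx^i ∧ dx^j`. -/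
def omegaF (n : ℕ) : WF n :=
  fun S _ m =>
    if m = 0 then
      MvPowerSeries.C (σ := Fin (2 * n)) (R := ℂ)
        (∑ i : Fin (2 * n), ∑ j : Fin (2 * n),
          if i < j ∧ S = {i, j} then stdOmega n i j else 0)
    else 0

/-- The curvature `Ω = ω + δr − dr − (i/ℏ) r⋆r` of the connection `−δ + d + (i/ℏ)[r,·]`. -/
def curv {n : ℕ} (r : WF n) : WF n :=
  fun S x => omegaF n S x + deltaW r S x - extD r S x - Complex.I • hInv (wMulF r r S x)

/-- The operator `δ⁻¹`, acting as `(1/(p+q)) Σ_k y^k ι_k` on the part of `y`-degree `p`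
and form-degree `q` (and as `0` for `p = q = 0`). -/
def deltaInv {n : ℕ} (a : WF n) : WF n :=
  fun S x m => Wc.mk fun β =>
    ((((β.sum fun _ e => e) + S.card : ℕ) : ℂ))⁻¹ *
      ∑ k : Fin (2 * n),
        if k ∉ S ∧ 1 ≤ β k then
          insSign S k * MvPowerSeries.coeff (β - Finsupp.single k 1) (a (insert k S) x m)
        else 0

/-! ### x-independent W-valued exterior forms (the graded algebra W⊗Λ) -/

/-- `W`-valued exterior forms with constant coefficients. -/
abbrev WL (n : ℕ) := Finset (Fin (2 * n)) → Wa (2 * n)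

/-- `δ` on `W ⊗ Λ`. -/
def deltaWL {n : ℕ} (a : WL n) : WL n :=
  fun S => ∑ i ∈ S, insSign S i • yDa i (a (S.erase i))

/-- Product (Moyal combined with wedge) on `W ⊗ Λ`. -/
def wMulL {n : ℕ} (a b : WL n) : WL n :=
  fun S => ∑ S1 ∈ S.powerset, shuffleSign S1 (S \ S1) • wmul (a S1) (b (S \ S1))

/-- `E` on `W ⊗ Λ`, acting on the `W`-coefficients. -/
def EulL {n : ℕ} (a : WL n) : WL n := fun S => EulWa (a S)

/-- The `W`-valued 1-form `Σ_{i,j} ω_{ij} y^i dx^j`. -/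
def oydxW (n : ℕ) : WL n :=
  fun S m =>
    if m = 0 then
      ∑ j : Fin (2 * n),
        (if S = {j} then ∑ i : Fin (2 * n), stdOmega n i j • MvPowerSeries.X i else 0)
    else 0

/-- The 1-form `K₀ = −(Er − iℏ ∂r/∂ℏ + i r + (i/2) Σ ω_{ij} y^i dx^j)`. -/
def K0 {n : ℕ} (r : WF n) : WF n :=
  fun S x =>
    -(EulWa (r S x) - Complex.I • hM (hD (r S x)) + Complex.I • r S x
      + (Complex.I / 2) • oydxW n S)

/-- The quantum Liouville-type operator `ρ(u) = (ℏ/i) ∂u/∂ℏ + E u`. -/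
def rhoW {n : ℕ} (u : WF n) : WF n :=
  fun S x m => (-Complex.I * (m : ℂ)) • u S x m + EulW (u S x m)

/-- `c₁` extended to `W`-valued forms. -/
def c1F {n : ℕ} (a b : WF n) : WF n :=
  fun S x => ∑ S1 ∈ S.powerset, shuffleSign S1 (S \ S1) • c1W (a S1 x) (b (S \ S1) x)

/-! ### The Laurent (ℏ-inverted) Weyl algebra and forms -/

/-- The extended Weyl algebra `W⁺ = ℂ[[y]][ℏ⁻¹,ℏ]]` as `ℏ`-coefficient sequences. -/
abbrev WaZ (N : ℕ) := ℤ → Wc N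

/-- Moyal–Weyl product on `W⁺` for a constant matrix `π`. -/
def wmulZPi {N : ℕ} (π : Matrix (Fin N) (Fin N) ℂ) (a b : WaZ N) : WaZ N := moyalZ yD π a b

/-- Moyal–Weyl product on `W⁺` for the standard symplectic Poisson matrix. -/
def wmulZ {n : ℕ} (a b : WaZ (2 * n)) : WaZ (2 * n) := wmulZPi (stdPi n) a b

/-- `W⁺`-valued exterior forms on `ℝ^{2n}`. -/
abbrev WFZ (n : ℕ) := Finset (Fin (2 * n)) → Pt n → WaZ (2 * n)

/-- `∂/∂y^i` on `W⁺`. -/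
def yDaZ {N : ℕ} (i : Fin N) (w : WaZ N) : WaZ N := fun m => yD i (w m)

/-- `δ` on `W⁺`-valued forms. -/
def deltaZ {n : ℕ} (a : WFZ n) : WFZ n :=
  fun S x => ∑ i ∈ S, insSign S i • yDaZ i (a (S.erase i) x)

/-- `∂/∂x^i` on `W⁺`-valued functions. -/
def xDZ {n : ℕ} (i : Fin (2 * n)) (f : Pt n → WaZ (2 * n)) (x : Pt n) : WaZ (2 * n) :=
  fun m => Wc.mk fun β =>
    fderiv ℝ (fun x' => MvPowerSeries.coeff β (f x' m)) x (Pi.single i 1)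

/-- Exterior derivative on `W⁺`-valued forms. -/
def extDZ {n : ℕ} (a : WFZ n) : WFZ n :=
  fun S x => ∑ i ∈ S, insSign S i • xDZ i (a (S.erase i)) x

/-- Product on `W⁺`-valued forms. -/
def wMulZF {n : ℕ} (a b : WFZ n) : WFZ n :=
  fun S x => ∑ S1 ∈ S.powerset, shuffleSign S1 (S \ S1) • wmulZ (a S1 x) (b (S \ S1) x)

/-- Graded commutator with a 1-form, on `W⁺`-valued forms. -/
def comm1Z {n : ℕ} (r a : WFZ n) : WFZ n :=
  fun S x => wMulZF r a S x - (-1 : ℂ) ^ (S.card - 1) • wMulZF a r S x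

/-- Division by `ℏ` on `W⁺` (exact: a shift of Laurent coefficients). -/
def shiftZ {N : ℕ} (a : WaZ N) : WaZ N := fun m => a (m + 1)

/-- The connection `D = −δ + d + (i/ℏ)[r,·]` on `W⁺`-valued forms. -/
def fedDZ {n : ℕ} (r a : WFZ n) : WFZ n :=
  fun S x => -deltaZ a S x + extDZ a S x + Complex.I • shiftZ (comm1Z r a S x)

/-- Termwise `∂/∂ℏ` on `W⁺`. -/
def hDZ {N : ℕ} (a : WaZ N) : WaZ N := fun m => ((m + 1 : ℤ) : ℂ) • a (m + 1)

/-- `∂/∂ℏ` on `W⁺`-valued forms. -/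
def hDZF {n : ℕ} (a : WFZ n) : WFZ n := fun S x => hDZ (a S x)

/-- `E` on `W⁺`. -/
def EulZ {N : ℕ} (a : WaZ N) : WaZ N := fun m => EulW (a m)

/-- `E` on `W⁺`-valued forms. -/
def EulZF {n : ℕ} (a : WFZ n) : WFZ n := fun S x => EulZ (a S x)

/-- `c₁` on `W⁺`. -/
def c1Za {n : ℕ} (a b : WaZ (2 * n)) : WaZ (2 * n) :=
  hDZ (wmulZ a b) - wmulZ (hDZ a) b - wmulZ a (hDZ b)

/-- `c₁` on `W⁺`-valued forms. -/
def c1ZF {n : ℕ} (a b : WFZ n) : WFZ n :=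
  fun S x => ∑ S1 ∈ S.powerset, shuffleSign S1 (S \ S1) • c1Za (a S1 x) (b (S \ S1) x)

/-- Smoothness of the coefficients of a `W⁺`-valued form. -/
def WFZ.Smooth {n : ℕ} (a : WFZ n) : Prop :=
  ∀ S m β, ContDiff ℝ (⊤ : ℕ∞) fun x => MvPowerSeries.coeff β (a S x m)

/-- Homogeneity of form-degree `q` for `W⁺`-valued forms. -/
def isFormZ {n : ℕ} (q : ℕ) (a : WFZ n) : Prop := ∀ S, S.card ≠ q → a S = 0

/-- A `W⁺`-valued form has power series coefficients (no negative powers of `ℏ`). -/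
def PSupp {n : ℕ} (a : WFZ n) : Prop := ∀ S x m, m < 0 → a S x m = 0

/-- A Laurent series is bounded below in `ℏ`-degree. -/
def BddZ {α : Type*} [Zero α] (f : ℤ → α) : Prop :=
  ∃ N : ℕ, ∀ m : ℤ, m < -(N : ℤ) → f m = 0

/-! ### Smooth functions and star-products on ℝ^N -/

/-- Complex-valued functions on `ℝ^N`. -/
abbrev SmFn (N : ℕ) := (Fin N → ℝ) → ℂ

/-- Partial derivative `∂/∂x^i` of a (smooth) function. -/
def xDf {N : ℕ} (i : Fin N) (f : SmFn N) : SmFn N := fun x => fderiv ℝ f x (Pi.single i 1)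

/-- Iterated partial derivative `∂^α`. -/
def xDfM {N : ℕ} (α : Fin N →₀ ℕ) (f : SmFn N) : SmFn N :=
  (List.finRange N).foldr (fun i g => (xDf i)^[α i] g) f

/-- Formal power series with function coefficients: `C^∞(ℝ^N,ℂ)[[ℏ]]`. -/
abbrev SmSer (N : ℕ) := ℕ → SmFn N

/-- Formal Laurent series with function coefficients: `C^∞(ℝ^N,ℂ)[ℏ⁻¹,ℏ]]`. -/
abbrev SmLau (N : ℕ) := ℤ → SmFn N

/-- All coefficients of a series are smooth. -/
def SmSer.Smooth {N : ℕ} (F : SmSer N) : Prop := ∀ m, ContDiff ℝ (⊤ : ℕ∞) (F m)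

/-- All coefficients of a Laurent series are smooth. -/
def SmLau.Smooth {N : ℕ} (F : SmLau N) : Prop := ∀ m, ContDiff ℝ (⊤ : ℕ∞) (F m)

/-- The Moyal star-product on `C^∞(ℝ^N,ℂ)[[ℏ]]` for a constant matrix `π`. -/
def fMul {N : ℕ} (π : Matrix (Fin N) (Fin N) ℂ) (F G : SmSer N) : SmSer N :=
  moyalN xDf π F G

/-- The Moyal star-product on Laurent series. -/
def fMulZ {N : ℕ} (π : Matrix (Fin N) (Fin N) ℂ) (F G : SmLau N) : SmLau N :=
  moyalZ xDf π F G

/-- The Moyal star-product with `ℏ`-dependent matrix `π(ℏ) = π₀ + ℏπ₁`. -/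
def fMulH {N : ℕ} (π0 π1 : Matrix (Fin N) (Fin N) ℂ) (F G : SmSer N) : SmSer N :=
  moyalNH xDf π0 π1 F G

/-- The constant series `1`. -/
def oneSer (N : ℕ) : SmSer N := fun m => if m = 0 then (fun _ => 1) else 0

/-- The standard Poisson bracket `{f,g} = Σ π^{ij} ∂_i f ∂_j g` on `ℝ^{2n}`. -/
def pb (n : ℕ) (f g : SmFn (2 * n)) : SmFn (2 * n) :=
  fun x => ∑ i, ∑ j, stdPi n i j * xDf i f x * xDf j g x

/-! ### Multidifferential operators and star-products -/

/-- A `k`-multidifferential operator on `C^∞(ℝ^N,ℂ)`: a finite sum of terms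
`u(x) (∂^{α₁}f₁)⋯(∂^{α_k}f_k)`, recorded by its finitely many coefficients. -/
abbrev MDOp (N k : ℕ) := (Fin k → (Fin N →₀ ℕ)) →₀ SmFn N

/-- Action of a multidifferential operator. -/
def MDOp.app {N k : ℕ} (c : MDOp N k) (f : Fin k → SmFn N) : SmFn N :=
  fun x => c.sum fun T u => u x * ∏ t, xDfM (T t) (f t) x

/-- A multidifferential operator has smooth coefficients. -/
def MDOp.Smooth {N k : ℕ} (c : MDOp N k) : Prop := ∀ T, ContDiff ℝ (⊤ : ℕ∞) (c T)

/-- A family of bidifferential operators `C_k`, extended `ℂ[[ℏ]]`-bilinearly: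
`F ⋆ G = Σ ℏ^{k+l+l'} C_k(F_l, G_{l'})`. -/
def starN {N : ℕ} (C : ℕ → MDOp N 2) (F G : SmSer N) : SmSer N :=
  fun m => ∑ k ∈ Finset.range (m + 1), ∑ l ∈ Finset.range (m - k + 1),
    MDOp.app (C k) ![F l, G (m - k - l)]

/-- The `ℂ[ℏ⁻¹,ℏ]]`-bilinear extension of a star-product to Laurent series. -/
def starZ {N : ℕ} (C : ℕ → MDOp N 2) (F G : SmLau N) : SmLau N :=
  fun m => ∑ᶠ p : ℕ × ℤ, MDOp.app (C p.1) ![F p.2, G (m - p.1 - p.2)]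

/-- Action of a Laurent cochain `c = Σ_l ℏ^l c_l` of multidifferential operators
on a `k`-tuple of Laurent series. -/
def lac {N k : ℕ} (cc : ℤ → MDOp N k) (u : Fin k → SmLau N) : SmLau N :=
  fun m => ∑ᶠ v : Fin k → ℤ, MDOp.app (cc (m - ∑ t, v t)) fun t => u t (v t)

/-- A differential star-product on `ℝ^{2n}` quantizing the standard symplectic
structure: `f ⋆ g = Σ ℏ^k C_k(f,g)` with `C_k` bidifferential, `C₀(f,g) = fg`,
`1` a unit, `⋆` associative, and `C₁(f,g) − C₁(g,f) = −i{f,g}`. -/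
structure DiffStar (n : ℕ) where
  C : ℕ → MDOp (2 * n) 2
  smooth : ∀ k, MDOp.Smooth (C k)
  C0 : ∀ f g : SmFn (2 * n), MDOp.app (C 0) ![f, g] = f * g
  unit_left : ∀ F : SmSer (2 * n), SmSer.Smooth F → starN C (oneSer (2 * n)) F = F
  unit_right : ∀ F : SmSer (2 * n), SmSer.Smooth F → starN C F (oneSer (2 * n)) = F
  assoc : ∀ F G H : SmSer (2 * n), SmSer.Smooth F → SmSer.Smooth G → SmSer.Smooth H →
    starN C (starN C F G) H = starN C F (starN C G H)
  C1skew : ∀ f g : SmFn (2 * n), ContDiff ℝ (⊤ : ℕ∞) f → ContDiff ℝ (⊤ : ℕ∞) g →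
    MDOp.app (C 1) ![f, g] - MDOp.app (C 1) ![g, f] = fun x => -Complex.I * pb n f g x

/-! ### Hochschild coboundary -/

/-- The Hochschild coboundary `b̃` of a `k`-cochain with respect to a product `mul`. -/
def hoch {A : Type*} [AddCommGroup A] (mul : A → A → A) {k : ℕ}
    (c : (Fin k → A) → A) : (Fin (k + 1) → A) → A :=
  fun u =>
    mul (u 0) (c fun t => u t.succ)
      + ∑ i : Fin k, ((-1 : ℤ) ^ ((i : ℕ) + 1)) •
          c (fun j => if (j : ℕ) < (i : ℕ) then u j.castSucc
            else if (j : ℕ) = (i : ℕ) then mul (u j.castSucc) (u j.succ)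
            else u j.succ)
      + ((-1 : ℤ) ^ (k + 1)) • mul (c fun t => u t.castSucc) (u (Fin.last k))

/-! ### Formal differential operators on ℂ[[y]] -/

/-- A formal `k`-differential operator on `ℂ[[y^1,…,y^N]]`:
`c(a₁,…,a_k) = Σ_T u^T (∂^{T 1}a₁)⋯(∂^{T k}a_k)` with coefficients
`u^T ∈ ℂ[[y]]` such that for each degree `d` only finitely many tuples `T` have a
coefficient containing a nonzero monomial of degree `≤ d`. -/
structure FDOp (N k : ℕ) where
  u : (Fin k → (Fin N →₀ ℕ)) → Wc N
  fin : ∀ d : ℕ,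
    {T : Fin k → (Fin N →₀ ℕ) | ∃ β : Fin N →₀ ℕ,
      (β.sum fun _ e => e) ≤ d ∧ MvPowerSeries.coeff β (u T) ≠ 0}.Finite

/-- Action of a formal differential operator (the defining sum converges in the
`y`-adic topology; each coefficient receives only finitely many contributions). -/
def FDOp.app {N k : ℕ} (P : FDOp N k) (a : Fin k → Wc N) : Wc N :=
  Wc.mk fun β => ∑ᶠ T : Fin k → (Fin N →₀ ℕ),
    MvPowerSeries.coeff β (P.u T * ∏ t, yDM (T t) (a t))

/-- Action of a Laurent cochain `c = Σ_l ℏ^l c_l` of formal differential operators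
on a `k`-tuple of elements of `W⁺`. -/
def flac {N k : ℕ} (cc : ℤ → FDOp N k) (a : Fin k → WaZ N) : WaZ N :=
  fun m => ∑ᶠ v : Fin k → ℤ, FDOp.app (cc (m - ∑ t, v t)) fun t => a t (v t)

/-! ### Flat sections, Taylor series and quantum exponential -/

/-- Fiberwise Taylor series of a smooth function at `x`. -/
def taylorW {N : ℕ} (f : SmFn N) (x : Fin N → ℝ) : Wc N :=
  Wc.mk fun β => (∏ i : Fin N, ((β i).factorial : ℂ))⁻¹ * xDfM β f x

/-- Sections of the Weyl bundle over `ℝ^{2n}` (W-valued 0-forms). -/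
abbrev Sect (n : ℕ) := Pt n → Wa (2 * n)

/-- The fiberwise Taylor lift of a series of smooth functions. -/
def taylorS {n : ℕ} (F : SmSer (2 * n)) : Sect n := fun x m => taylorW (F m) x

/-- A section has smooth coefficients. -/
def Sect.Smooth {n : ℕ} (u : Sect n) : Prop :=
  ∀ m β, ContDiff ℝ (⊤ : ℕ∞) fun x => MvPowerSeries.coeff β (u x m)

/-- A section is flat for `D = −δ + d`: its component equations read
`∂u/∂x^i = ∂u/∂y^i` for all `i`. -/
def Sect.Flat {n : ℕ} (u : Sect n) : Prop :=
  ∀ (i : Fin (2 * n)) (x : Pt n), xD i u x = yDa i (u x)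

/-- The symbol map `σ(u) = u|_{y=0}`. -/
def sigma {n : ℕ} (u : Sect n) : SmSer (2 * n) :=
  fun m x => MvPowerSeries.coeff 0 (u x m)

/-- Fiberwise Moyal–Weyl product of sections. -/
def wmulS {n : ℕ} (u v : Sect n) : Sect n := fun x => wmul (u x) (v x)

/-! ### Vector fields and Liouville-type operators -/

/-- Action of a vector field `X = Σ_j X^j ∂_j` on a function. -/
def XAct {N : ℕ} (X : Fin N → SmFn N) (f : SmFn N) : SmFn N :=
  fun x => ∑ j, X j x * xDf j f x

/-- A smooth function viewed as a series concentrated in `ℏ`-degree `0`. -/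
def embS {N : ℕ} (f : SmFn N) : SmSer N := fun m => if m = 0 then f else 0

/-- The Hochschild coboundary `b̃X(f,g) = f⋆(Xg) − X(f⋆g) + (Xf)⋆g` of a vector
field, for the Moyal star-product with constant matrix `π`. -/
def bXMoyal {N : ℕ} (π : Matrix (Fin N) (Fin N) ℂ) (X : Fin N → SmFn N)
    (f g : SmFn N) : SmSer N :=
  fMul π (embS f) (embS (XAct X g)) - (fun m => XAct X (fMul π (embS f) (embS g) m))
    + fMul π (embS (XAct X f)) (embS g)

/-- The operator `ℏ ∂_ℏ + X` on `C^∞(ℝ^N,ℂ)[[ℏ]]`. -/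
def LOp {N : ℕ} (X : Fin N → SmFn N) (F : SmSer N) : SmSer N :=
  fun m x => (m : ℂ) * F m x + XAct X (F m) x

/-- The derivative of a star-product with respect to `ℏ`:
`c(f,g) = Σ_{k≥1} k ℏ^{k-1} C_k(f,g)`, extended `ℂ[[ℏ]]`-bilinearly. -/
def dStar {N : ℕ} (C : ℕ → MDOp N 2) (F G : SmSer N) : SmSer N :=
  fun m => ∑ k ∈ Finset.Icc 1 (m + 1), (k : ℂ) •
    ∑ l ∈ Finset.range (m + 1 - k + 1), MDOp.app (C k) ![F l, G (m + 1 - k - l)]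

end StarPaper

/-!
Write `ρ = (ℏ/i) ∂/∂ℏ + E` and `κ = (i/2) Σ ω_{ij} y^i dx^j`, so that `K₀ = -(ρ r + i r + κ)`.
The `k`-th Moyal term lowers the `y`-degree by `2k` and carries `ℏ^k`, hence `ρ` is a derivation
of `⋆`; moreover `ρ` commutes with `d`, `δ ρ = ρ δ - (i/2) δ` and `ℏ⁻¹ ρ = (ρ - i) ℏ⁻¹`.
Since `[Σ_i ω_{ij} y^i, a] = iℏ ∂a/∂y^j`, one gets `δκ = iω` and `(i/ℏ)[r, κ] = -(i/2) δr`.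
Adding up, `D K₀ = iΩ + ρΩ` for every `W`-valued 1-form `r`, and `ρΩ = -iℏ ∂Ω/∂ℏ` as soon as
`Ω` does not depend on `y`.
-/

namespace StarPaper

section FiberOperators

variable {N : ℕ}

lemma coeff_yD (i : Fin N) (a : Wc N) (β : Fin N →₀ ℕ) :
    MvPowerSeries.coeff β (yD i a)
      = ((β i : ℂ) + 1) * MvPowerSeries.coeff (β + Finsupp.single i 1) a := rfl

lemma coeff_EulW (a : Wc N) (β : Fin N →₀ ℕ) :
    MvPowerSeries.coeff β (EulW a)
      = -Complex.I / 2 * (∑ i, (β i : ℂ)) * MvPowerSeries.coeff β a := rfl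

lemma yD_add (i : Fin N) (a b : Wc N) : yD i (a + b) = yD i a + yD i b := by
  ext β
  simp only [coeff_yD, map_add]
  ring

lemma yD_smul (i : Fin N) (c : ℂ) (a : Wc N) : yD i (c • a) = c • yD i a := by
  ext β
  simp only [coeff_yD, map_smul, smul_eq_mul]
  ring

lemma yD_zero (i : Fin N) : yD i (0 : Wc N) = 0 := by
  simpa using yD_smul i 0 0

lemma yD_sum {ι : Type*} (i : Fin N) (s : Finset ι) (f : ι → Wc N) :
    yD i (∑ t ∈ s, f t) = ∑ t ∈ s, yD i (f t) :=
  map_sum (AddMonoidHom.mk' (yD i) (yD_add i)) f s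

lemma EulW_add (a b : Wc N) : EulW (a + b) = EulW a + EulW b := by
  ext β
  simp only [coeff_EulW, map_add]
  ring

lemma EulW_smul (c : ℂ) (a : Wc N) : EulW (c • a) = c • EulW a := by
  ext β
  simp only [coeff_EulW, map_smul, smul_eq_mul]
  ring

lemma EulW_sum {ι : Type*} (s : Finset ι) (f : ι → Wc N) :
    EulW (∑ t ∈ s, f t) = ∑ t ∈ s, EulW (f t) :=
  map_sum (AddMonoidHom.mk' EulW EulW_add) f s

lemma EulW_mul (a b : Wc N) : EulW (a * b) = EulW a * b + a * EulW b := by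
  ext β
  rw [map_add, coeff_EulW, MvPowerSeries.coeff_mul, MvPowerSeries.coeff_mul,
    MvPowerSeries.coeff_mul, Finset.mul_sum, ← Finset.sum_add_distrib]
  refine Finset.sum_congr rfl fun p hp => ?_
  rw [Finset.HasAntidiagonal.mem_antidiagonal] at hp
  simp only [coeff_EulW, ← hp, Finsupp.add_apply, Nat.cast_add, Finset.sum_add_distrib]
  ring

lemma EulW_yD (i : Fin N) (a : Wc N) :
    EulW (yD i a) = yD i (EulW a) + (Complex.I / 2) • yD i a := by
  ext β
  have hdeg : ∑ j, (((β + Finsupp.single i 1 : Fin N →₀ ℕ) j : ℕ) : ℂ) = ∑ j, (β j : ℂ) + 1 := by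
    simp [Finsupp.single_apply, Finset.sum_add_distrib]
  simp only [map_add, map_smul, coeff_EulW, coeff_yD, smul_eq_mul, hdeg]
  ring

lemma iterD_add {k : ℕ} (v : Fin k → Fin N) (a b : Wc N) :
    iterD yD v (a + b) = iterD yD v a + iterD yD v b := by
  induction k with
  | zero => rfl
  | succ k ih => simp only [iterD, ih, yD_add]

lemma iterD_smul {k : ℕ} (v : Fin k → Fin N) (c : ℂ) (a : Wc N) :
    iterD yD v (c • a) = c • iterD yD v a := by
  induction k with
  | zero => rfl
  | succ k ih => simp only [iterD, ih, yD_smul]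

lemma EulW_iterD {k : ℕ} (v : Fin k → Fin N) (a : Wc N) :
    EulW (iterD yD v a) = iterD yD v (EulW a) + ((k : ℂ) * Complex.I / 2) • iterD yD v a := by
  induction k with
  | zero => simp [iterD]
  | succ k ih =>
    simp only [iterD, EulW_yD, ih, yD_add, yD_smul, Nat.cast_succ]
    module

end FiberOperators

section Moyal

variable {N : ℕ} (π : Matrix (Fin N) (Fin N) ℂ)

lemma moyalTerm_add_left (k : ℕ) (a a' b : Wc N) :
    moyalTerm yD π k (a + a') b = moyalTerm yD π k a b + moyalTerm yD π k a' b := by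
  simp only [moyalTerm, iterD_add, add_mul, smul_add, Finset.sum_add_distrib]

lemma moyalTerm_add_right (k : ℕ) (a b b' : Wc N) :
    moyalTerm yD π k a (b + b') = moyalTerm yD π k a b + moyalTerm yD π k a b' := by
  simp only [moyalTerm, iterD_add, mul_add, smul_add, Finset.sum_add_distrib]

lemma moyalTerm_smul_left (k : ℕ) (c : ℂ) (a b : Wc N) :
    moyalTerm yD π k (c • a) b = c • moyalTerm yD π k a b := by
  simp only [moyalTerm, iterD_smul, smul_mul_assoc, Finset.smul_sum, smul_comm c]

lemma moyalTerm_smul_right (k : ℕ) (c : ℂ) (a b : Wc N) :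
    moyalTerm yD π k a (c • b) = c • moyalTerm yD π k a b := by
  simp only [moyalTerm, iterD_smul, mul_smul_comm, Finset.smul_sum, smul_comm c]

lemma moyalTerm_zero_left (k : ℕ) (b : Wc N) : moyalTerm yD π k 0 b = 0 := by
  simpa using moyalTerm_smul_left π k 0 0 b

lemma moyalTerm_zero_right (k : ℕ) (a : Wc N) : moyalTerm yD π k a 0 = 0 := by
  simpa using moyalTerm_smul_right π k 0 a 0

lemma EulW_moyalTerm (k : ℕ) (a b : Wc N) :
    EulW (moyalTerm yD π k a b)
      = moyalTerm yD π k (EulW a) b + moyalTerm yD π k a (EulW b)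
        + ((k : ℂ) * Complex.I) • moyalTerm yD π k a b := by
  simp only [moyalTerm, EulW_smul, EulW_sum, Finset.smul_sum, ← Finset.sum_add_distrib]
  refine Finset.sum_congr rfl fun i _ => Finset.sum_congr rfl fun j _ => ?_
  simp only [EulW_mul, EulW_iterD, add_mul, mul_add, smul_mul_assoc, mul_smul_comm]
  module

lemma wmulPi_add_left (a a' b : Wa N) : wmulPi π (a + a') b = wmulPi π a b + wmulPi π a' b := by
  funext m
  simp only [wmulPi, moyalN, Pi.add_apply, moyalTerm_add_left, Finset.sum_add_distrib]

lemma wmulPi_add_right (a b b' : Wa N) :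
    wmulPi π a (b + b') = wmulPi π a b + wmulPi π a b' := by
  funext m
  simp only [wmulPi, moyalN, Pi.add_apply, moyalTerm_add_right, Finset.sum_add_distrib]

lemma wmulPi_smul_left (c : ℂ) (a b : Wa N) : wmulPi π (c • a) b = c • wmulPi π a b := by
  funext m
  simp only [wmulPi, moyalN, Pi.smul_apply, moyalTerm_smul_left, Finset.smul_sum]

lemma wmulPi_smul_right (c : ℂ) (a b : Wa N) : wmulPi π a (c • b) = c • wmulPi π a b := by
  funext m
  simp only [wmulPi, moyalN, Pi.smul_apply, moyalTerm_smul_right, Finset.smul_sum]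

lemma wmulPi_single_zero_left (a : Wc N) (b : Wa N) (m : ℕ) :
    wmulPi π (Pi.single 0 a : Wa N) b m
      = ∑ k ∈ Finset.range (m + 1), moyalTerm yD π k a (b (m - k)) := by
  unfold wmulPi moyalN
  refine Finset.sum_congr rfl fun k _ => ?_
  rw [Finset.sum_eq_single_of_mem 0 (by simp)]
  · simp
  · intro l _ hl
    simp [hl, moyalTerm_zero_left]

lemma wmulPi_single_zero_right (a : Wc N) (b : Wa N) (m : ℕ) :
    wmulPi π b (Pi.single 0 a : Wa N) m
      = ∑ k ∈ Finset.range (m + 1), moyalTerm yD π k (b (m - k)) a := by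
  unfold wmulPi moyalN
  refine Finset.sum_congr rfl fun k _ => ?_
  rw [Finset.sum_eq_single_of_mem (m - k) (by simp)]
  · simp
  · intro l hl _
    have : m - k - l ≠ 0 := by
      rw [Finset.mem_range] at hl
      omega
    simp [this, moyalTerm_zero_right]

end Moyal

section MoyalLowOrder

variable {R : Type*} [CommRing R] [Module ℂ R] {N : ℕ} (D : Fin N → R → R)
  (π : Matrix (Fin N) (Fin N) ℂ)

lemma moyalTerm_zero (a b : R) : moyalTerm D π 0 a b = a * b := by
  simp [moyalTerm, iterD]

lemma moyalTerm_one (a b : R) :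
    moyalTerm D π 1 a b = (-Complex.I / 2) • ∑ p, ∑ q, π p q • (D p a * D q b) := by
  simp only [moyalTerm, ← (Equiv.funUnique (Fin 1) (Fin N)).symm.sum_comp]
  simp [iterD]

end MoyalLowOrder

section Liouville

variable {N : ℕ}

def rhoWa : Wa N →ₗ[ℂ] Wa N where
  toFun u m := (-Complex.I * m) • u m + EulW (u m)
  map_add' u v := by
    funext m
    simp only [Pi.add_apply, EulW_add, smul_add]
    abel
  map_smul' c u := by
    funext m
    simp only [Pi.smul_apply, EulW_smul, RingHom.id_apply, smul_add, smul_comm c]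

lemma rhoWa_apply (u : Wa N) (m : ℕ) : rhoWa u m = (-Complex.I * m) • u m + EulW (u m) := rfl

lemma rhoW_apply {n : ℕ} (u : WF n) (S : Finset (Fin (2 * n))) (x : Pt n) :
    rhoW u S x = rhoWa (u S x) := rfl

lemma coeff_rhoWa (u : Wa N) (m : ℕ) (β : Fin N →₀ ℕ) :
    MvPowerSeries.coeff β (rhoWa u m)
      = (-Complex.I * m + -Complex.I / 2 * ∑ i, (β i : ℂ)) * MvPowerSeries.coeff β (u m) := by
  rw [rhoWa_apply, map_add, map_smul, coeff_EulW, smul_eq_mul]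
  ring

lemma hM_hD_apply (u : Wa N) (m : ℕ) : hM (hD u) m = (m : ℂ) • u m := by
  cases m with
  | zero => simp [hM]
  | succ m => simp [hM, hD]

lemma rhoWa_eq (u : Wa N) : rhoWa u = EulWa u - Complex.I • hM (hD u) := by
  funext m
  rw [rhoWa_apply, Pi.sub_apply, Pi.smul_apply, hM_hD_apply, smul_smul, EulWa]
  module

lemma EulWa_eq_zero {u : Wa N} (hu : ∀ m β, β ≠ 0 → MvPowerSeries.coeff β (u m) = 0) :
    EulWa u = 0 := by
  funext m
  ext β
  by_cases hβ : β = 0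
  · simp [EulWa, coeff_EulW, hβ]
  · simp [EulWa, coeff_EulW, hu m β hβ]

lemma rhoWa_wmulPi (π : Matrix (Fin N) (Fin N) ℂ) (a b : Wa N) :
    rhoWa (wmulPi π a b) = wmulPi π (rhoWa a) b + wmulPi π a (rhoWa b) := by
  funext m
  simp only [rhoWa_apply, Pi.add_apply, wmulPi, moyalN, EulW_sum, Finset.smul_sum,
    ← Finset.sum_add_distrib]
  refine Finset.sum_congr rfl fun k hk => Finset.sum_congr rfl fun l hl => ?_
  have hm : (m : ℂ) = k + l + ((m - k - l : ℕ) : ℂ) := by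
    rw [Finset.mem_range] at hk hl
    norm_cast
    omega
  rw [EulW_moyalTerm, moyalTerm_add_left, moyalTerm_add_right, moyalTerm_smul_left,
    moyalTerm_smul_right, hm]
  module

variable (u v : Wa N)

lemma hInv_add : hInv (u + v) = hInv u + hInv v := rfl

lemma hInv_sub : hInv (u - v) = hInv u - hInv v := rfl

lemma hInv_neg : hInv (-u) = -hInv u := rfl

lemma hInv_smul (c : ℂ) : hInv (c • u) = c • hInv u := rfl

lemma hInv_hM : hInv (hM u) = u := rfl

lemma hInv_rhoWa : hInv (rhoWa u) = rhoWa (hInv u) - Complex.I • hInv u := by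
  funext m
  simp only [hInv, rhoWa_apply, Pi.sub_apply, Pi.smul_apply, Nat.cast_succ]
  module

end Liouville

section Symplectic

def finSumFinTwoMul (n : ℕ) : Fin n ⊕ Fin n ≃ Fin (2 * n) :=
  finSumFinEquiv.trans (finCongr (two_mul n).symm)

lemma stdPi_eq_submatrix_J (n : ℕ) :
    stdPi n
      = (-Matrix.J (Fin n) ℂ).submatrix (finSumFinTwoMul n).symm (finSumFinTwoMul n).symm := by
  ext i j
  obtain ⟨i, rfl⟩ := (finSumFinTwoMul n).surjective i
  obtain ⟨j, rfl⟩ := (finSumFinTwoMul n).surjective j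
  have hinl (k : Fin n) : (finSumFinTwoMul n (.inl k) : ℕ) = k := rfl
  have hinr (k : Fin n) : (finSumFinTwoMul n (.inr k) : ℕ) = n + k := rfl
  rcases i with i | i <;> rcases j with j | j <;> have := i.isLt <;> have := j.isLt <;>
    simp [stdPi, Matrix.J, hinl, hinr, Matrix.one_apply, Fin.ext_iff] <;>
    split_ifs <;> first | omega | simp

lemma stdPi_mul_self (n : ℕ) : stdPi n * stdPi n = -1 := by
  rw [stdPi_eq_submatrix_J, Matrix.submatrix_mul_equiv, neg_mul_neg, Matrix.J_squared]
  ext i j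
  simp [Matrix.one_apply]

lemma stdPi_transpose (n : ℕ) : (stdPi n).transpose = -stdPi n := by
  rw [stdPi_eq_submatrix_J, Matrix.transpose_submatrix, Matrix.transpose_neg, Matrix.J_transpose]
  rfl

lemma stdPi_transpose_mul_stdOmega (n : ℕ) : (stdPi n).transpose * stdOmega n = -1 := by
  rw [stdPi_transpose, stdOmega, neg_mul_neg, stdPi_mul_self]

lemma stdPi_mul_stdOmega (n : ℕ) : stdPi n * stdOmega n = 1 := by
  rw [stdOmega, mul_neg, stdPi_mul_self, neg_neg]

lemma stdOmega_antisymm {n : ℕ} (i j : Fin (2 * n)) : stdOmega n j i = -stdOmega n i j := by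
  have := congrFun (congrFun (stdPi_transpose n) i) j
  simp only [Matrix.transpose_apply, Matrix.neg_apply] at this
  simp [stdOmega, this]

end Symplectic

section LinearCommutator

variable {N : ℕ}

def linY (c : Fin N → ℂ) : Wc N := ∑ i, c i • MvPowerSeries.X i

lemma yD_one (p : Fin N) : yD p (1 : Wc N) = 0 := by
  ext β
  simp [coeff_yD, MvPowerSeries.coeff_one]

lemma yD_X (p i : Fin N) : yD p (MvPowerSeries.X i : Wc N) = if p = i then 1 else 0 := by
  ext β
  rw [coeff_yD, MvPowerSeries.coeff_X]
  by_cases hpi : p = i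
  · subst hpi
    by_cases hβ : β = 0 <;> simp [hβ, MvPowerSeries.coeff_one]
  · have hne : β + Finsupp.single p 1 ≠ Finsupp.single i 1 := fun h => by
      simpa [Finsupp.single_apply, Ne.symm hpi] using DFunLike.congr_fun h p
    simp [hne, hpi]

lemma yD_linY (p : Fin N) (c : Fin N → ℂ) : yD p (linY c) = c p • 1 := by
  simp [linY, yD_sum, yD_smul, yD_X]

lemma iterD_linY {k : ℕ} (v : Fin (k + 1) → Fin N) (c : Fin N → ℂ) :
    iterD yD v (linY c) = if k = 0 then c (v 0) • 1 else 0 := by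
  induction k with
  | zero => exact yD_linY (v 0) c
  | succ k ih =>
    rw [iterD, ih, if_neg k.succ_ne_zero]
    split_ifs <;> simp [yD_smul, yD_one, yD_zero]

variable {n : ℕ}

abbrev omegaY (n : ℕ) (j : Fin (2 * n)) : Wc (2 * n) := linY fun i => stdOmega n i j

lemma moyalTerm_omegaY_sub (k : ℕ) (j : Fin (2 * n)) (b : Wc (2 * n)) :
    moyalTerm yD (stdPi n) k (omegaY n j) b - moyalTerm yD (stdPi n) k b (omegaY n j)
      = if k = 1 then Complex.I • yD j b else 0 := by
  match k with
  | 0 => simp [moyalTerm_zero, mul_comm]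
  | 1 =>
    have hleft (q : Fin (2 * n)) :
        ∑ p, stdPi n p q * stdOmega n p j = -if q = j then 1 else 0 := by
      simpa [Matrix.mul_apply, Matrix.one_apply] using
        congrFun (congrFun (stdPi_transpose_mul_stdOmega n) q) j
    have hright (p : Fin (2 * n)) :
        ∑ q, stdPi n p q * stdOmega n q j = if p = j then 1 else 0 := by
      simpa [Matrix.mul_apply, Matrix.one_apply] using
        congrFun (congrFun (stdPi_mul_stdOmega n) p) j
    simp only [moyalTerm_one, yD_linY, smul_mul_assoc, one_mul, mul_smul_comm, mul_one, smul_smul]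
    rw [Finset.sum_comm (f := fun p q => (stdPi n p q * stdOmega n p j) • yD q b)]
    simp only [← Finset.sum_smul, hleft, hright]
    simp
    module
  | k + 2 =>
    have hlin (v : Fin (k + 2) → Fin (2 * n)) : iterD yD v (omegaY n j) = 0 := by
      rw [iterD_linY]
      simp
    simp [moyalTerm, hlin]

lemma wmul_omegaY_sub (j : Fin (2 * n)) (b : Wa (2 * n)) :
    wmul (Pi.single 0 (omegaY n j)) b - wmul b (Pi.single 0 (omegaY n j))
      = Complex.I • hM (yDa j b) := by
  funext m
  simp only [Pi.sub_apply, wmul, wmulPi_single_zero_left, wmulPi_single_zero_right,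
    ← Finset.sum_sub_distrib, moyalTerm_omegaY_sub, Finset.sum_ite_eq', Finset.mem_range]
  cases m with
  | zero => simp [hM]
  | succ m => simp [hM, yDa]

end LinearCommutator

section Forms

variable {n : ℕ}

lemma yDa_add (i : Fin (2 * n)) (u v : Wa (2 * n)) : yDa i (u + v) = yDa i u + yDa i v := by
  funext m
  exact yD_add i (u m) (v m)

lemma yDa_smul (i : Fin (2 * n)) (c : ℂ) (u : Wa (2 * n)) : yDa i (c • u) = c • yDa i u := by
  funext m
  exact yD_smul i c (u m)

lemma yDa_zero (i : Fin (2 * n)) : yDa i (0 : Wa (2 * n)) = 0 := by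
  simpa using yDa_smul i 0 0

lemma yDa_single_zero (i : Fin (2 * n)) (a : Wc (2 * n)) :
    yDa i (Pi.single 0 a : Wa (2 * n)) = (Pi.single 0 (yD i a) : Wa (2 * n)) := by
  funext m
  by_cases hm : m = 0
  · subst hm
    simp [yDa]
  · simp [yDa, hm, yD_zero]

lemma yDa_rhoWa (i : Fin (2 * n)) (u : Wa (2 * n)) :
    yDa i (rhoWa u) = rhoWa (yDa i u) - (Complex.I / 2) • yDa i u := by
  funext m
  simp only [yDa, rhoWa_apply, Pi.sub_apply, Pi.smul_apply, yD_add, yD_smul, EulW_yD]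
  module

lemma wmul_add_left (a a' b : Wa (2 * n)) : wmul (a + a') b = wmul a b + wmul a' b :=
  wmulPi_add_left _ a a' b

lemma wmul_add_right (a b b' : Wa (2 * n)) : wmul a (b + b') = wmul a b + wmul a b' :=
  wmulPi_add_right _ a b b'

lemma wmul_smul_left (c : ℂ) (a b : Wa (2 * n)) : wmul (c • a) b = c • wmul a b :=
  wmulPi_smul_left _ c a b

lemma wmul_smul_right (c : ℂ) (a b : Wa (2 * n)) : wmul a (c • b) = c • wmul a b :=
  wmulPi_smul_right _ c a b

lemma wmul_zero_left (b : Wa (2 * n)) : wmul 0 b = 0 := by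
  simpa using wmul_smul_left 0 0 b

lemma wmul_zero_right (a : Wa (2 * n)) : wmul a 0 = 0 := by
  simpa using wmul_smul_right 0 a 0

variable (S : Finset (Fin (2 * n))) (x : Pt n)

lemma deltaW_add (a b : WF n) : deltaW (a + b) S x = deltaW a S x + deltaW b S x := by
  simp only [deltaW, Pi.add_apply, yDa_add, smul_add, Finset.sum_add_distrib]

lemma deltaW_smul (c : ℂ) (a : WF n) : deltaW (c • a) S x = c • deltaW a S x := by
  simp only [deltaW, Pi.smul_apply, yDa_smul, Finset.smul_sum, smul_comm c]

lemma deltaW_neg (a : WF n) : deltaW (-a) S x = -deltaW a S x := by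
  simpa using deltaW_smul S x (-1) a

lemma deltaW_rhoW (a : WF n) :
    deltaW (rhoW a) S x = rhoWa (deltaW a S x) - (Complex.I / 2) • deltaW a S x := by
  simp only [deltaW, map_sum, map_smul, Finset.smul_sum, ← Finset.sum_sub_distrib]
  refine Finset.sum_congr rfl fun i _ => ?_
  rw [rhoW_apply, yDa_rhoWa]
  module

lemma wMulF_add_left (a a' b : WF n) :
    wMulF (a + a') b S x = wMulF a b S x + wMulF a' b S x := by
  simp only [wMulF, Pi.add_apply, wmul_add_left, smul_add, Finset.sum_add_distrib]

lemma wMulF_add_right (a b b' : WF n) :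
    wMulF a (b + b') S x = wMulF a b S x + wMulF a b' S x := by
  simp only [wMulF, Pi.add_apply, wmul_add_right, smul_add, Finset.sum_add_distrib]

lemma wMulF_smul_left (c : ℂ) (a b : WF n) : wMulF (c • a) b S x = c • wMulF a b S x := by
  simp only [wMulF, Pi.smul_apply, wmul_smul_left, Finset.smul_sum, smul_comm c]

lemma wMulF_smul_right (c : ℂ) (a b : WF n) : wMulF a (c • b) S x = c • wMulF a b S x := by
  simp only [wMulF, Pi.smul_apply, wmul_smul_right, Finset.smul_sum, smul_comm c]

lemma rhoWa_wMulF (a b : WF n) :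
    rhoWa (wMulF a b S x) = wMulF (rhoW a) b S x + wMulF a (rhoW b) S x := by
  simp only [wMulF, map_sum, map_smul, wmul, rhoWa_wmulPi, smul_add, Finset.sum_add_distrib]
  rfl

lemma comm1_add (r a b : WF n) : comm1 r (a + b) S x = comm1 r a S x + comm1 r b S x := by
  simp only [comm1, wMulF_add_left, wMulF_add_right, smul_add]
  abel

lemma comm1_smul (c : ℂ) (r a : WF n) : comm1 r (c • a) S x = c • comm1 r a S x := by
  simp only [comm1, wMulF_smul_left, wMulF_smul_right, smul_sub, smul_comm c]

lemma comm1_neg (r a : WF n) : comm1 r (-a) S x = -comm1 r a S x := by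
  simpa using comm1_smul S x (-1) r a

lemma deltaW_eq_zero_of_isForm {q : ℕ} {a : WF n} (ha : isForm q a) (hS : S.card ≠ q + 1) :
    deltaW a S x = 0 := by
  refine Finset.sum_eq_zero fun i hi => ?_
  have hcard : (S.erase i).card ≠ q := by
    rw [Finset.card_erase_of_mem hi]
    have := Finset.card_pos.mpr ⟨i, hi⟩
    omega
  rw [ha _ hcard, Pi.zero_apply, yDa_zero, smul_zero]

lemma wMulF_eq_zero_of_isForm {p q : ℕ} {a b : WF n} (ha : isForm p a) (hb : isForm q b)
    (hS : S.card ≠ p + q) : wMulF a b S x = 0 := by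
  refine Finset.sum_eq_zero fun T hT => ?_
  rw [Finset.mem_powerset] at hT
  by_cases hTp : T.card = p
  · have hcard : (S \ T).card ≠ q := by
      rw [Finset.card_sdiff_of_subset hT]
      have := Finset.card_le_card hT
      omega
    simp [hb _ hcard, wmul_zero_right]
  · simp [ha _ hTp, wmul_zero_left]

lemma wMulF_eq_sum_singleton {a : WF n} (ha : isForm 1 a) (b : WF n) :
    wMulF a b S x = ∑ k ∈ S, shuffleSign {k} (S \ {k}) • wmul (a {k} x) (b (S \ {k}) x) := by
  rw [wMulF, ← Finset.sum_filter_of_ne (p := fun T => T.card = 1),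
    ← Finset.powersetCard_eq_filter, Finset.powersetCard_one, Finset.sum_map]
  · rfl
  · intro T _ hT
    by_contra hc
    exact hT (by simp [ha T hc, wmul_zero_left])

lemma isForm_rhoW {q : ℕ} {a : WF n} (ha : isForm q a) : isForm q (rhoW a) := by
  intro T hT
  funext y
  rw [rhoW_apply, ha T hT, Pi.zero_apply, map_zero]

lemma comm1_of_isForm_one {a b : WF n} (ha : isForm 1 a) (hb : isForm 1 b) :
    comm1 a b S x = wMulF a b S x + wMulF b a S x := by
  by_cases hS : S.card = 2
  · simp [comm1, hS]
  · simp [comm1, wMulF_eq_zero_of_isForm S x ha hb hS, wMulF_eq_zero_of_isForm S x hb ha hS]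

end Forms

section TwoForms

lemma exists_lt_of_card_eq_two {α : Type*} [LinearOrder α] {S : Finset α} (h : S.card = 2) :
    ∃ i j, i < j ∧ S = {i, j} := by
  obtain ⟨a, b, hab, rfl⟩ := Finset.card_eq_two.mp h
  rcases hab.lt_or_gt with h | h
  · exact ⟨a, b, h, rfl⟩
  · exact ⟨b, a, h, Finset.pair_comm a b⟩

variable {n : ℕ} {i j : Fin (2 * n)} (x : Pt n)

lemma deltaW_pair (hij : i < j) (a : WF n) :
    deltaW a {i, j} x = yDa i (a {j} x) - yDa j (a {i} x) := by
  have hi : insSign {i, j} i = 1 := by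
    simp [insSign, Finset.filter_insert, Finset.filter_singleton, hij.not_gt]
  have hj : insSign {i, j} j = -1 := by
    simp [insSign, Finset.filter_insert, Finset.filter_singleton, hij]
  have hei : ({i, j} : Finset (Fin (2 * n))).erase i = {j} := by grind
  have hej : ({i, j} : Finset (Fin (2 * n))).erase j = {i} := by grind
  rw [deltaW, Finset.sum_pair hij.ne, hi, hj, hei, hej]
  module

lemma wMulF_pair (hij : i < j) {a : WF n} (ha : isForm 1 a) (b : WF n) :
    wMulF a b {i, j} x = wmul (a {i} x) (b {j} x) - wmul (a {j} x) (b {i} x) := by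
  have hi : shuffleSign {i} {j} = 1 := by simp [shuffleSign, Finset.filter_singleton, hij.not_gt]
  have hj : shuffleSign {j} {i} = -1 := by simp [shuffleSign, Finset.filter_singleton, hij]
  have hdi : ({i, j} : Finset (Fin (2 * n))) \ {i} = {j} := by grind
  have hdj : ({i, j} : Finset (Fin (2 * n))) \ {j} = {i} := by grind
  rw [wMulF_eq_sum_singleton _ x ha, Finset.sum_pair hij.ne, hdi, hdj, hi, hj]
  module

lemma omegaF_pair (hij : i < j) : omegaF n {i, j} x = Pi.single 0 (stdOmega n i j • 1) := by
  have hcond (a b : Fin (2 * n)) : (a < b ∧ ({i, j} : Finset _) = {a, b}) ↔ (a = i ∧ b = j) := by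
    rw [← Finset.coe_inj, Finset.coe_pair, Finset.coe_pair, Set.pair_eq_pair_iff]
    grind
  funext m
  simp [omegaF, hcond, ite_and, Finset.sum_ite_irrel, MvPowerSeries.smul_eq_C_mul, Pi.single_apply]

lemma omegaF_eq_zero {S : Finset (Fin (2 * n))} (hS : S.card ≠ 2) : omegaF n S x = 0 := by
  funext m
  have hne (a b : Fin (2 * n)) : ¬(a < b ∧ S = {a, b}) := fun h =>
    hS (by rw [h.2, Finset.card_pair h.1.ne])
  simp [omegaF, hne]

lemma rhoWa_omegaF (S : Finset (Fin (2 * n))) : rhoWa (omegaF n S x) = 0 := by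
  funext m
  ext β
  rw [coeff_rhoWa]
  by_cases hm : m = 0
  · by_cases hβ : β = 0
    · simp [hm, hβ]
    · simp [omegaF, hm, hβ, MvPowerSeries.coeff_C]
  · simp [omegaF, hm]

end TwoForms

section Kappa

variable {n : ℕ}

def kappa (n : ℕ) : WF n := fun S _ => (Complex.I / 2) • oydxW n S

lemma oydxW_singleton (j : Fin (2 * n)) : oydxW n {j} = Pi.single 0 (omegaY n j) := by
  funext m
  simp [oydxW, Pi.single_apply, Finset.singleton_inj, linY]

lemma oydxW_eq_zero {S : Finset (Fin (2 * n))} (hS : S.card ≠ 1) : oydxW n S = 0 := by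
  funext m
  have hne (j : Fin (2 * n)) : S ≠ {j} := fun h => hS (by simp [h])
  simp [oydxW, hne]

lemma isForm_kappa : isForm 1 (kappa n) := by
  intro S hS
  funext x
  simp [kappa, oydxW_eq_zero hS]

lemma kappa_singleton (j : Fin (2 * n)) (x : Pt n) :
    kappa n {j} x = (Complex.I / 2) • Pi.single 0 (omegaY n j) := by
  rw [kappa, oydxW_singleton]

lemma deltaW_kappa (S : Finset (Fin (2 * n))) (x : Pt n) :
    deltaW (kappa n) S x = Complex.I • omegaF n S x := by
  by_cases hS : S.card = 2
  · obtain ⟨i, j, hij, rfl⟩ := exists_lt_of_card_eq_two hS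
    rw [deltaW_pair x hij, kappa_singleton, kappa_singleton, omegaF_pair x hij]
    funext m
    by_cases hm : m = 0
    · subst hm
      simp [yDa_smul, yDa_single_zero, yD_linY, stdOmega_antisymm i j]
      module
    · simp [yDa_smul, yDa_single_zero, hm]
  · rw [deltaW_eq_zero_of_isForm S x isForm_kappa hS, omegaF_eq_zero x hS, smul_zero]

lemma wmul_kappa_sub (k : Fin (2 * n)) (x : Pt n) (u : Wa (2 * n)) :
    wmul (kappa n {k} x) u - wmul u (kappa n {k} x) = (-1 / 2 : ℂ) • hM (yDa k u) := by
  have hI : Complex.I / 2 * Complex.I = -1 / 2 := by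
    rw [div_mul_eq_mul_div, Complex.I_mul_I]
  rw [kappa_singleton, wmul_smul_left, wmul_smul_right, ← smul_sub, wmul_omegaY_sub, smul_smul,
    hI]

lemma hInv_comm1_kappa {r : WF n} (hr : isForm 1 r) (S : Finset (Fin (2 * n))) (x : Pt n) :
    hInv (comm1 r (kappa n) S x) = (-1 / 2 : ℂ) • deltaW r S x := by
  rw [comm1_of_isForm_one S x hr isForm_kappa]
  by_cases hS : S.card = 2
  · obtain ⟨i, j, hij, rfl⟩ := exists_lt_of_card_eq_two hS
    rw [wMulF_pair x hij hr, wMulF_pair x hij isForm_kappa, deltaW_pair x hij]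
    have hi := congrArg hInv (wmul_kappa_sub i x (r {j} x))
    have hj := congrArg hInv (wmul_kappa_sub j x (r {i} x))
    rw [hInv_sub, hInv_smul, hInv_hM] at hi hj
    rw [hInv_add, hInv_sub, hInv_sub, smul_sub]
    linear_combination (norm := module) hi - hj
  · rw [wMulF_eq_zero_of_isForm S x hr isForm_kappa hS,
      wMulF_eq_zero_of_isForm S x isForm_kappa hr hS, deltaW_eq_zero_of_isForm S x hr hS,
      add_zero, smul_zero]
    rfl

end Kappa

section ExteriorDerivative

variable {n : ℕ}

lemma xD_map_add_const (T : Wa (2 * n) → Wa (2 * n)) (c : ℕ → (Fin (2 * n) →₀ ℕ) → ℂ)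
    (hT : ∀ u m β, MvPowerSeries.coeff β (T u m) = c m β * MvPowerSeries.coeff β (u m))
    (i : Fin (2 * n)) (f : Pt n → Wa (2 * n)) (k : Wa (2 * n)) (x : Pt n) :
    xD i (fun y => T (f y) + k) x = T (xD i f x) := by
  funext m
  ext β
  have hfun : (fun y => MvPowerSeries.coeff β ((T (f y) + k) m))
      = fun y => (c m β • fun y => MvPowerSeries.coeff β (f y m)) y
          + MvPowerSeries.coeff β (k m) := by
    funext y
    simp [hT]
  rw [hT]
  show fderiv ℝ (fun y => MvPowerSeries.coeff β ((T (f y) + k) m)) x (Pi.single i 1) = _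
  rw [hfun, fderiv_add_const, fderiv_const_smul_field]
  rfl

lemma extD_map_add_const (T : Wa (2 * n) →ₗ[ℂ] Wa (2 * n)) (c : ℕ → (Fin (2 * n) →₀ ℕ) → ℂ)
    (hT : ∀ u m β, MvPowerSeries.coeff β (T u m) = c m β * MvPowerSeries.coeff β (u m))
    (a : WF n) (k : WL n) (S : Finset (Fin (2 * n))) (x : Pt n) :
    extD (fun S x => T (a S x) + k S) S x = T (extD a S x) := by
  simp only [extD, map_sum, map_smul, xD_map_add_const T c hT]

lemma K0_eq (r : WF n) (S : Finset (Fin (2 * n))) (x : Pt n) :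
    K0 r S x = -(rhoWa (r S x) + Complex.I • r S x + kappa n S x) := by
  rw [K0, rhoWa_eq]
  rfl

lemma extD_K0 (r : WF n) (S : Finset (Fin (2 * n))) (x : Pt n) :
    extD (K0 r) S x = -(rhoWa (extD r S x) + Complex.I • extD r S x) := by
  let T : Wa (2 * n) →ₗ[ℂ] Wa (2 * n) := -(rhoWa + Complex.I • LinearMap.id)
  have hK : K0 r = fun S x => T (r S x) + -(Complex.I / 2) • oydxW n S := by
    funext S x
    rw [K0_eq]
    simp only [T, LinearMap.neg_apply, LinearMap.add_apply, LinearMap.smul_apply,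
      LinearMap.id_apply, kappa]
    module
  rw [hK, extD_map_add_const T
    (fun m β => -(-Complex.I * m + -Complex.I / 2 * ∑ i, (β i : ℂ) + Complex.I))]
  · rfl
  · intro u m β
    simp only [T, LinearMap.neg_apply, LinearMap.add_apply, LinearMap.smul_apply,
      LinearMap.id_apply, Pi.neg_apply, Pi.add_apply, Pi.smul_apply, map_neg, map_add, map_smul,
      coeff_rhoWa, smul_eq_mul]
    ring

end ExteriorDerivative

section Curvature

variable {n : ℕ} {r : WF n}

lemma comm1_self (hr : isForm 1 r) (S : Finset (Fin (2 * n))) (x : Pt n) :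
    comm1 r r S x = (2 : ℂ) • wMulF r r S x := by
  rw [comm1_of_isForm_one S x hr hr, two_smul]

lemma comm1_rhoW (hr : isForm 1 r) (S : Finset (Fin (2 * n))) (x : Pt n) :
    comm1 r (rhoW r) S x = rhoWa (wMulF r r S x) := by
  rw [comm1_of_isForm_one S x hr (isForm_rhoW hr), rhoWa_wMulF, add_comm]

theorem fedD_K0 (hr : isForm 1 r) (S : Finset (Fin (2 * n))) (x : Pt n) :
    fedD r (K0 r) S x = Complex.I • curv r S x + rhoWa (curv r S x) := by
  have hK : K0 r = -(rhoW r + Complex.I • r + kappa n) := by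
    funext S x
    exact K0_eq r S x
  have hδ : deltaW (K0 r) S x = -(rhoWa (deltaW r S x) + (Complex.I / 2) • deltaW r S x
      + Complex.I • omegaF n S x) := by
    rw [hK, deltaW_neg, deltaW_add, deltaW_add, deltaW_smul, deltaW_rhoW, deltaW_kappa]
    module
  have hc : hInv (comm1 r (K0 r) S x) = -(rhoWa (hInv (wMulF r r S x))
      + Complex.I • hInv (wMulF r r S x) - (1 / 2 : ℂ) • deltaW r S x) := by
    rw [hK, comm1_neg, comm1_add, comm1_add, comm1_smul, comm1_rhoW hr, comm1_self hr, hInv_neg,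
      hInv_add, hInv_add, hInv_smul, hInv_smul, hInv_rhoWa, hInv_comm1_kappa hr]
    module
  have hρ : rhoWa (curv r S x) = rhoWa (deltaW r S x) - rhoWa (extD r S x)
      - Complex.I • rhoWa (hInv (wMulF r r S x)) := by
    simp only [curv, map_sub, map_add, map_smul, rhoWa_omegaF, zero_add]
  rw [fedD, hδ, extD_K0, hc, hρ, curv]
  module

end Curvature

theorem D_K0_eq_curvature_derivative_general (n : ℕ) (r : WF n)
    (hr : isForm 1 r) (hab : isScalar (curv r)) :
    fedD r (K0 r) = fun S x => Complex.I • (curv r S x - hM (hD (curv r S x))) := by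
  funext S x
  rw [fedD_K0 hr, rhoWa_eq, EulWa_eq_zero (hab S x), smul_sub]
  module

/-- If `D = −δ + d + (i/ℏ)[r,·]` is Abelian with Weyl curvature
`Ω = ω + δr − dr − (i/ℏ) r⋆r ∈ Ω²(ℝ^{2n},ℂ)[[ℏ]]`, then with
`K₀ = −(Er − iℏ ∂r/∂ℏ + i r + (i/2) Σ ω_{ij} y^i dx^j)` one has
`D K₀ = i(Ω − ℏ ∂Ω/∂ℏ) = −iℏ² ∂(ℏ⁻¹Ω)/∂ℏ`. -/
theorem D_K0_eq_curvature_derivative (n : ℕ) (r : WF n)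
    (hr : isForm 1 r) (hrs : WF.Smooth r) (hab : isScalar (curv r)) :
    fedD r (K0 r) = fun S x => Complex.I • (curv r S x - hM (hD (curv r S x))) :=
  D_K0_eq_curvature_derivative_general n r hr hab

end StarPaper
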